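/- Let F ∈ L_γ for γ > 0 with φ_F(γ) < ∞, and let ξ₁,…,ξ_n be i.i.d. with distribution F, S_{n−1} = ξ₁ + ⋯ + ξ_{n−1}, S_n = S_{n−1} + ξ_n. Then for every fixed a ∈ ℝ and n ≥ 1, P(S_{n−1} ≤ a, S_n > x) ∼ F̄(x) · E[e^{γ S_{n−1}} 1{S_{n−1} ≤ a}] as x → ∞. -/

import Mathlib

/-! Conditioning on `S_{n-1} = t`, independence turns the probability into
`∫_{t ≤ a} F̄(x - t) dν(t)` with `ν` the law of `S_{n-1}`. After division by `F̄(x)` the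
integrand tends to `e^{γt}` by the definition of `L_γ`, and for `t ≤ a` it is dominated by
`F̄(x - a) / F̄(x)`, which converges and so is bounded for large `x`; dominated convergence
against the finite measure `ν` concludes. -/

open MeasureTheory Filter Set

/-- The tail distribution function of a probability measure on ℝ. -/
noncomputable def tail (μ : Measure ℝ) (x : ℝ) : ℝ := (μ (Set.Ioi x)).toReal

/-- The exponential moment `φ_F(α) = ∫ e^{αx} dF(x)`, valued in `[0,∞]`. -/
noncomputable def expMoment (μ : Measure ℝ) (α : ℝ) : ENNReal :=
  ∫⁻ x, ENNReal.ofReal (Real.exp (α * x)) ∂μ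

/-- The class `L_γ`: positive tail, and `F̄(x-k)/F̄(x) → e^{γ k}` for every fixed `k`. -/
def MemL (μ : Measure ℝ) (γ : ℝ) : Prop :=
  (∀ x, 0 < tail μ x) ∧
  ∀ k : ℝ, Tendsto (fun x => tail μ (x - k) / tail μ x) atTop (nhds (Real.exp (γ * k)))

open Topology

lemma tail_antitone (μ : Measure ℝ) [IsFiniteMeasure μ] : Antitone (tail μ) := fun _ _ h =>
  ENNReal.toReal_mono (measure_ne_top μ _) (measure_mono (Ioi_subset_Ioi h))

lemma tail_nonneg (μ : Measure ℝ) (x : ℝ) : 0 ≤ tail μ x := ENNReal.toReal_nonneg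

lemma monotone_measure_Ioi_sub (μ : Measure ℝ) (x : ℝ) :
    Monotone fun t => μ (Ioi (x - t)) := fun _ _ h =>
  measure_mono (Ioi_subset_Ioi (sub_le_sub_left h x))

lemma toReal_setLIntegral_measure_Ioi_sub (μ ν : Measure ℝ) [IsFiniteMeasure μ]
    (s : Set ℝ) (x : ℝ) :
    (∫⁻ t in s, μ (Ioi (x - t)) ∂ν).toReal = ∫ t in s, tail μ (x - t) ∂ν :=
  (integral_toReal (monotone_measure_Ioi_sub μ x).measurable.aemeasurable
    (Eventually.of_forall fun _ => measure_lt_top μ _)).symm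

lemma measure_mem_and_lt_add_eq_setLIntegral {Ω : Type*} [MeasurableSpace Ω]
    {P : Measure Ω} [IsFiniteMeasure P] {X Y : Ω → ℝ} (hX : Measurable X) (hY : Measurable Y)
    (hXY : ProbabilityTheory.IndepFun X Y P) {s : Set ℝ} (hs : MeasurableSet s) (x : ℝ) :
    P {ω | X ω ∈ s ∧ x < X ω + Y ω} = ∫⁻ t in s, P.map Y (Ioi (x - t)) ∂P.map X := by
  set A : Set (ℝ × ℝ) := {p | p.1 ∈ s ∧ x < p.1 + p.2}
  have hA : MeasurableSet A := (measurable_fst hs).inter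
    (measurableSet_lt measurable_const (measurable_fst.add measurable_snd))
  have hfibre : ∀ t, P.map Y (Prod.mk t ⁻¹' A)
      = s.indicator (fun t => P.map Y (Ioi (x - t))) t := by
    intro t
    by_cases ht : t ∈ s
    · rw [indicator_of_mem ht]
      congr 1
      ext y
      simp [A, ht, sub_lt_iff_lt_add']
    · simp [A, ht]
  calc P {ω | X ω ∈ s ∧ x < X ω + Y ω} = P.map (fun ω => (X ω, Y ω)) A :=
        (Measure.map_apply (hX.prodMk hY) hA).symm
    _ = ∫⁻ t, P.map Y (Prod.mk t ⁻¹' A) ∂P.map X := by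
        rw [hXY.map_prod_eq_prod_map_map hX.aemeasurable hY.aemeasurable, Measure.prod_apply hA]
    _ = ∫⁻ t in s, P.map Y (Ioi (x - t)) ∂P.map X := by
        rw [lintegral_congr hfibre, lintegral_indicator hs]

lemma tendsto_setIntegral_Iic_tail_sub_div_tail {μ ν : Measure ℝ} [IsFiniteMeasure μ]
    [IsFiniteMeasure ν] {γ : ℝ}
    (hμ : ∀ k, Tendsto (fun x => tail μ (x - k) / tail μ x) atTop (𝓝 (Real.exp (γ * k))))
    (a : ℝ) :
    Tendsto (fun x => ∫ t in Iic a, tail μ (x - t) / tail μ x ∂ν) atTop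
      (𝓝 (∫ t in Iic a, Real.exp (γ * t) ∂ν)) := by
  have hmeas : ∀ x, AEStronglyMeasurable (fun t => tail μ (x - t) / tail μ x)
      (ν.restrict (Iic a)) := fun x =>
    ((tail_antitone μ).measurable.comp (measurable_const.sub measurable_id)).div_const
      _ |>.aestronglyMeasurable
  have hbound : ∀ᶠ x in atTop, tail μ (x - a) / tail μ x ≤ Real.exp (γ * a) + 1 :=
    ((hμ a).eventually_lt_const (lt_add_one _)).mono fun _ h => h.le
  refine tendsto_integral_filter_of_dominated_convergence (fun _ => Real.exp (γ * a) + 1)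
    (Eventually.of_forall hmeas) ?_ (integrable_const _) (Eventually.of_forall hμ)
  filter_upwards [hbound] with x hx
  refine (ae_restrict_iff' measurableSet_Iic).mpr (Eventually.of_forall fun t (ht : t ≤ a) => ?_)
  rw [Real.norm_of_nonneg (div_nonneg (tail_nonneg μ _) (tail_nonneg μ _))]
  exact (div_le_div_of_nonneg_right (tail_antitone μ (sub_le_sub_left ht x))
    (tail_nonneg μ x)).trans hx

theorem tendsto_measure_le_and_lt_add_div_tail {Ω : Type*} [MeasurableSpace Ω]
    {P : Measure Ω} [IsFiniteMeasure P] {X Y : Ω → ℝ} (hX : Measurable X) (hY : Measurable Y)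
    (hXY : ProbabilityTheory.IndepFun X Y P) {γ : ℝ}
    (hY_tail : ∀ k, Tendsto (fun x => tail (P.map Y) (x - k) / tail (P.map Y) x) atTop
      (𝓝 (Real.exp (γ * k))))
    (a : ℝ) :
    Tendsto (fun x => (P {ω | X ω ≤ a ∧ x < X ω + Y ω}).toReal / tail (P.map Y) x) atTop
      (𝓝 (∫ ω in {ω | X ω ≤ a}, Real.exp (γ * X ω) ∂P)) := by
  have hratio : ∀ x, (P {ω | X ω ≤ a ∧ x < X ω + Y ω}).toReal / tail (P.map Y) x
      = ∫ t in Iic a, tail (P.map Y) (x - t) / tail (P.map Y) x ∂P.map X := fun x => by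
    rw [integral_div, ← toReal_setLIntegral_measure_Ioi_sub,
      ← measure_mem_and_lt_add_eq_setLIntegral hX hY hXY measurableSet_Iic]
    rfl
  have hlimit : ∫ ω in {ω | X ω ≤ a}, Real.exp (γ * X ω) ∂P
      = ∫ t in Iic a, Real.exp (γ * t) ∂P.map X :=
    (setIntegral_map measurableSet_Iic (measurable_const_mul γ).exp.aestronglyMeasurable
      hX.aemeasurable).symm
  simp only [hratio, hlimit]
  exact tendsto_setIntegral_Iic_tail_sub_div_tail hY_tail a

theorem joint_tail_equiv_general {Ω : Type*} [MeasurableSpace Ω]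
    (ℙ : Measure Ω) [IsProbabilityMeasure ℙ]
    (μ : Measure ℝ)
    (ξ : ℕ → Ω → ℝ) (hmeas : ∀ i, Measurable (ξ i))
    (hindep : ProbabilityTheory.iIndepFun ξ ℙ)
    (hdist : ∀ i, Measure.map (ξ i) ℙ = μ)
    (S : ℕ → Ω → ℝ) (hS : ∀ n ω, S n ω = ∑ i ∈ Finset.range n, ξ i ω)
    (γ : ℝ) (hL : MemL μ γ)
    (a : ℝ) (n : ℕ) (hn : 1 ≤ n) :
    Tendsto (fun x =>
        (ℙ {ω | S (n - 1) ω ≤ a ∧ x < S n ω}).toReal / tail μ x) atTop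
      (nhds (∫ ω in {ω | S (n - 1) ω ≤ a}, Real.exp (γ * S (n - 1) ω) ∂ℙ)) := by
  obtain ⟨m, rfl⟩ : ∃ m, n = m + 1 := ⟨n - 1, by omega⟩
  have hS_eq : S m = ∑ i ∈ Finset.range m, ξ i := funext fun ω => by
    rw [hS, Finset.sum_apply]
  have hS_succ : ∀ ω, S (m + 1) ω = S m ω + ξ m ω := fun ω => by
    rw [hS, hS, Finset.sum_range_succ]
  have hS_meas : Measurable (S m) := funext (hS m) ▸ Finset.measurable_sum _ fun i _ => hmeas i
  have hS_indep : ProbabilityTheory.IndepFun (S m) (ξ m) ℙ :=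
    hS_eq ▸ hindep.indepFun_finsetSum_of_notMem hmeas Finset.notMem_range_self
  rw [← hdist m] at hL ⊢
  simp only [Nat.add_sub_cancel, hS_succ]
  exact tendsto_measure_le_and_lt_add_div_tail hS_meas (hmeas m) hS_indep hL.2 a

theorem joint_tail_equiv {Ω : Type*} [MeasurableSpace Ω]
    (ℙ : Measure Ω) [IsProbabilityMeasure ℙ]
    (μ : Measure ℝ) [IsProbabilityMeasure μ]
    (ξ : ℕ → Ω → ℝ) (hmeas : ∀ i, Measurable (ξ i))
    (hindep : ProbabilityTheory.iIndepFun ξ ℙ)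
    (hdist : ∀ i, Measure.map (ξ i) ℙ = μ)
    (S : ℕ → Ω → ℝ) (hS : ∀ n ω, S n ω = ∑ i ∈ Finset.range n, ξ i ω)
    (γ : ℝ) (hγ : 0 < γ) (hL : MemL μ γ) (hφ : expMoment μ γ < ⊤)
    (a : ℝ) (n : ℕ) (hn : 1 ≤ n) :
    Tendsto (fun x =>
        (ℙ {ω | S (n - 1) ω ≤ a ∧ x < S n ω}).toReal / tail μ x) atTop
      (nhds (∫ ω in {ω | S (n - 1) ω ≤ a}, Real.exp (γ * S (n - 1) ω) ∂ℙ)) :=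
  joint_tail_equiv_general ℙ μ ξ hmeas hindep hdist S hS γ hL a n hn
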